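/- Let M ≥ 0 and 0 < ρ ≤ 1/(2√(1 + M²)). Let x, y ∈ ℝ² and u, v ∈ ℝ² with ‖u‖ ≤ M and ‖v‖ ≤ M, and suppose ‖(x + t·u) − (y + t·v)‖ ≥ 1 for every t ∈ ℝ. Then the open ρ-neighborhoods in ℝ³ of the worldlines L_x = {(x + t·u, t) : t ∈ ℝ} and L_y = {(y + s·v, s) : s ∈ ℝ} are disjoint. -/

import Mathlib

/-- Space-time `ℝ³ = ℝ² × ℝ`, with the Euclidean norm `‖(p, t)‖ = √(‖p‖² + t²)`. -/
noncomputable abbrev SpaceTime : Type :=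
  WithLp 2 (EuclideanSpace ℝ (Fin 2) × ℝ)

/-- The space-time point `(p, t) ∈ ℝ² × ℝ`. -/
noncomputable def stPoint (p : EuclideanSpace ℝ (Fin 2)) (t : ℝ) : SpaceTime :=
  (WithLp.equiv 2 (EuclideanSpace ℝ (Fin 2) × ℝ)).symm (p, t)

/-- The worldline of a particle starting at `x` with velocity `u`. -/
noncomputable def worldline (x u : EuclideanSpace ℝ (Fin 2)) : Set SpaceTime :=
  {z : SpaceTime | ∃ t : ℝ, z = stPoint (x + t • u) t}

/-!
Take points `(x + t u, t)` and `(y + s v, s)` on the two worldlines. Moving the second one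
back to time `t` along `v` costs at most `M |t - s|` in space, so the separation hypothesis
gives `1 ≤ ‖(x + t u) - (y + s v)‖ + M |t - s|`, and by Cauchy–Schwarz the right-hand side is
at most `√(1 + M²)` times their space-time distance. Hence the worldlines are at distance at
least `1 / √(1 + M²) ≥ 2ρ`, so their `ρ`-neighborhoods cannot meet.
-/

open Metric

theorem disjoint_infDist_lt_of_two_mul_le_dist {X : Type*} [PseudoMetricSpace X]
    {A B : Set X} {ρ : ℝ} (hA : A.Nonempty) (hB : B.Nonempty)
    (h : ∀ a ∈ A, ∀ b ∈ B, 2 * ρ ≤ dist a b) :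
    Disjoint {z | infDist z A < ρ} {z | infDist z B < ρ} := by
  refine Set.disjoint_left.2 fun z hzA hzB ↦ ?_
  obtain ⟨a, ha, hza⟩ := (infDist_lt_iff hA).1 hzA
  obtain ⟨b, hb, hzb⟩ := (infDist_lt_iff hB).1 hzB
  have := dist_triangle_left a b z
  linarith [h a ha b hb]

theorem Real.add_mul_le_sqrt_mul_sqrt (a b c d : ℝ) :
    a * b + c * d ≤ √(a ^ 2 + c ^ 2) * √(b ^ 2 + d ^ 2) := by
  rw [← Real.sqrt_mul (by positivity)]
  exact (le_abs_self _).trans <| Real.abs_le_sqrt <| by nlinarith [sq_nonneg (a * d - b * c)]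

theorem dist_stPoint (p q : EuclideanSpace ℝ (Fin 2)) (t s : ℝ) :
    dist (stPoint p t) (stPoint q s) = √(‖p - q‖ ^ 2 + (t - s) ^ 2) := by
  rw [WithLp.prod_dist_eq_of_L2]
  simp [stPoint, dist_eq_norm, sq_abs]

theorem inv_sqrt_le_dist_stPoint_of_forall_one_le_norm {M : ℝ}
    {x y u v : EuclideanSpace ℝ (Fin 2)} (hv : ‖v‖ ≤ M)
    (hsep : ∀ t : ℝ, 1 ≤ ‖(x + t • u) - (y + t • v)‖) (t s : ℝ) :
    1 / √(1 + M ^ 2) ≤ dist (stPoint (x + t • u) t) (stPoint (y + s • v) s) := by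
  rw [div_le_iff₀' (by positivity), dist_stPoint]
  set d := ‖(x + t • u) - (y + s • v)‖
  have hmove : 1 ≤ 1 * d + M * |t - s| := calc
    1 ≤ ‖(x + t • u) - (y + t • v)‖ := hsep t
    _ = ‖((x + t • u) - (y + s • v)) + (s - t) • v‖ := by congr 1; module
    _ ≤ d + ‖(s - t) • v‖ := norm_add_le _ _
    _ ≤ 1 * d + M * |t - s| := by
      rw [norm_smul, Real.norm_eq_abs, abs_sub_comm, one_mul, mul_comm M]
      gcongr
  have hcs := Real.add_mul_le_sqrt_mul_sqrt 1 d M |t - s|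
  rw [one_pow, sq_abs] at hcs
  linarith

theorem worldline_neighborhoods_disjoint_general (M ρ : ℝ)
    (hρ : ρ ≤ 1 / (2 * Real.sqrt (1 + M ^ 2)))
    (x y u v : EuclideanSpace ℝ (Fin 2)) (hv : ‖v‖ ≤ M)
    (hsep : ∀ t : ℝ, ‖(x + t • u) - (y + t • v)‖ ≥ 1) :
    Disjoint {z : SpaceTime | Metric.infDist z (worldline x u) < ρ}
      {z : SpaceTime | Metric.infDist z (worldline y v) < ρ} := by
  have h2ρ : 2 * ρ ≤ 1 / √(1 + M ^ 2) := by
    rw [le_div_iff₀ (by positivity)] at hρ ⊢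
    linarith
  refine disjoint_infDist_lt_of_two_mul_le_dist ⟨_, 0, rfl⟩ ⟨_, 0, rfl⟩ ?_
  rintro _ ⟨t, rfl⟩ _ ⟨s, rfl⟩
  exact h2ρ.trans (inv_sqrt_le_dist_stPoint_of_forall_one_le_norm hv hsep t s)

/-- If `‖u‖, ‖v‖ ≤ M`, the moving points `x + t·u` and `y + t·v` stay at distance at
least `1` at all times, and `0 < ρ ≤ 1/(2√(1 + M²))`, then the open `ρ`-neighborhoods
of the two worldlines in space-time are disjoint. -/
theorem worldline_neighborhoods_disjoint (M ρ : ℝ) (hM : 0 ≤ M)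
    (hρ₀ : 0 < ρ) (hρ : ρ ≤ 1 / (2 * Real.sqrt (1 + M ^ 2)))
    (x y u v : EuclideanSpace ℝ (Fin 2)) (hu : ‖u‖ ≤ M) (hv : ‖v‖ ≤ M)
    (hsep : ∀ t : ℝ, ‖(x + t • u) - (y + t • v)‖ ≥ 1) :
    Disjoint {z : SpaceTime | Metric.infDist z (worldline x u) < ρ}
      {z : SpaceTime | Metric.infDist z (worldline y v) < ρ} :=
  worldline_neighborhoods_disjoint_general M ρ hρ x y u v hv hsep
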